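/- Convertibility: Let M ∈ 𝔐(m). For every b ∈ S₊ and every pair of distinct commodities i ≠ j, there exists an offer a ∈ S_P such that ν(a,b) is an īj-vector, i.e. ν(a,b) = −s·e_i + t·e_j for some reals s,t > 0 (all other components zero). -/

import Mathlib

open Finset

/-- `v` and `w` have the same componentwise sign pattern `(+,−,0)`, i.e. `v ∈ ⟨w⟩`. -/
def SameSign {m : ℕ} (v w : Fin m → ℝ) : Prop :=
  ∀ i, (0 < v i ↔ 0 < w i) ∧ (v i < 0 ↔ w i < 0)

/-- An (abstract) exchange mechanism on the commodity set `{1,…,m}` (modelled as `Fin m`):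
a finite index set `K = K₁ ⊔ ⋯ ⊔ K_m` (an index `h` belongs to `K_i` iff `ind h = i`),
together with, for every number `n` of traders, a return map `rho n`. -/
structure ExchangeMechanism (m : ℕ) where
  K : Type
  fintypeK : Fintype K
  decEqK : DecidableEq K
  ind : K → Fin m
  rho : (n : ℕ) → (Fin n → K → ℝ) → Fin n → Fin m → ℝ

namespace ExchangeMechanism

variable {m : ℕ} (M : ExchangeMechanism m)

instance : Fintype M.K := M.fintypeK
instance : DecidableEq M.K := M.decEqK

/-- `a ∈ S = ℝ₊^K`. -/
def Nonneg (a : M.K → ℝ) : Prop := ∀ h, 0 ≤ a h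

/-- `b ∈ S₊ = ℝ₊₊^K`. -/
def Pos (b : M.K → ℝ) : Prop := ∀ h, 0 < b h

/-- `(a¹,…,aⁿ) ∈ S(n)`: an admissible tuple of offers (nonnegative, positive in aggregate). -/
def Valid (n : ℕ) (a : Fin n → M.K → ℝ) : Prop :=
  (∀ k, M.Nonneg (a k)) ∧ M.Pos (∑ k, a k)

/-- The aggregate `ā ∈ C = ℝ₊^m` of an offer `a`, `ā_i = Σ_{h ∈ K_i} a_h`. -/
def agg (a : M.K → ℝ) : Fin m → ℝ :=
  fun i => ∑ h ∈ Finset.univ.filter (fun h => M.ind h = i), a h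

/-- Conservation of commodities: everything received is redistributed. -/
def Conserves : Prop :=
  ∀ n (a : Fin n → M.K → ℝ), M.Valid n a →
    ∑ k, M.rho n a k = ∑ k, M.agg (a k)

/-- Anonymity. -/
def Anonymous : Prop :=
  ∀ n (a : Fin n → M.K → ℝ) (σ : Equiv.Perm (Fin n)), M.Valid n a →
    M.rho n (a ∘ σ) = (M.rho n a) ∘ σ

/-- Aggregation: merging the last two offers merges the last two returns. -/
def Aggregative : Prop :=
  ∀ n (a : Fin (n + 2) → M.K → ℝ), M.Valid (n + 2) a →
    M.rho (n + 1)
      (Fin.snoc (fun k : Fin n => a k.castSucc.castSucc)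
        (a (Fin.castSucc (Fin.last n)) + a (Fin.last (n + 1)))) =
      Fin.snoc (fun k : Fin n => M.rho (n + 2) a k.castSucc.castSucc)
        (M.rho (n + 2) a (Fin.castSucc (Fin.last n)) + M.rho (n + 2) a (Fin.last (n + 1)))

/-- The scaling action `(λ ∗ a)_h = λ_{i} a_h` for `h ∈ K_i` on offers. -/
def scaleS (lam : Fin m → ℝ) (a : M.K → ℝ) : M.K → ℝ := fun h => lam (M.ind h) * a h

/-- Invariance under change of units. -/
def Invariant : Prop :=
  ∀ n (a : Fin n → M.K → ℝ) (lam : Fin m → ℝ), (∀ i, 0 < lam i) → M.Valid n a →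
    M.rho n (fun k => M.scaleS lam (a k)) = fun k i => lam i * M.rho n a k i

/-- Non-dissipation: each net return `rᵏ − āᵏ` is `0` or has a strictly positive component. -/
def NonDissipative : Prop :=
  ∀ n (a : Fin n → M.K → ℝ), M.Valid n a → ∀ k,
    M.rho n a k = M.agg (a k) ∨ ∃ i, M.agg (a k) i < M.rho n a k i

/-- The two-trader return `ρ(a, b)`: the first component of `ρ²`. -/
def ret (a b : M.K → ℝ) : Fin m → ℝ := M.rho 2 ![a, b] 0

/-- The unit offer `e_h`. -/
def unit (h : M.K) : M.K → ℝ := Pi.single h 1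

/-- `h ∈ K_i` is an `ij`-index: some offer of the others yields a positive return of `j`. -/
def IsIJIndex (i j : Fin m) (h : M.K) : Prop :=
  M.ind h = i ∧ ∃ a, M.Valid 2 ![M.unit h, a] ∧ 0 < M.ret (M.unit h) a j

/-- A pure `ij`-index: the return to `e_h` is always exclusively in commodity `j`. -/
def IsPureIJIndex (i j : Fin m) (h : M.K) : Prop :=
  M.IsIJIndex i j h ∧
    ∀ a, M.Valid 2 ![M.unit h, a] → ∀ k, k ≠ j → M.ret (M.unit h) a k = 0

/-- Flexibility: whenever there is an `ij`-index there is a pure `ij`-index. -/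
def Flexible : Prop :=
  ∀ i j : Fin m, (∃ h, M.IsIJIndex i j h) → ∃ h, M.IsPureIJIndex i j h

/-- The trade function `r(a,b) = ρ(a, b − a)` (for `a ≤ b`, `b ∈ S₊`). -/
def trade (a b : M.K → ℝ) : Fin m → ℝ := M.ret a (b - a)

/-- The net-trade function `ν(a,b) = r(a,b) − ā` (for `a ≤ b`, `b ∈ S₊`). -/
def nu (a b : M.K → ℝ) : Fin m → ℝ := M.trade a b - M.agg a

/-- `nu'` is an extension of the net-trade function `ν` to all of `S × S₊` which is
homogeneous of degree 1 in the offer and of degree 0 in the market state. -/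
def IsNuExtension (nu' : (M.K → ℝ) → (M.K → ℝ) → Fin m → ℝ) : Prop :=
  (∀ a b, M.Nonneg a → M.Pos b → a ≤ b → nu' a b = M.nu a b) ∧
  (∀ a b (t : ℝ), M.Nonneg a → M.Pos b → 0 < t → nu' (t • a) b = t • nu' a b) ∧
  (∀ a b (t : ℝ), M.Nonneg a → M.Pos b → 0 < t → nu' a (t • b) = nu' a b)


/-- `v → w`: the bundle `v` can be converted to `w` (relative to the extended
net-trade function `nu'`). -/
def Converts (nu' : (M.K → ℝ) → (M.K → ℝ) → Fin m → ℝ) (v w : Fin m → ℝ) : Prop :=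
  ∃ a b, M.Nonneg a ∧ M.Pos b ∧ M.agg a ≤ v ∧ w = v + nu' a b

/-- `v` can be converted to `w` in exactly `t` steps. -/
def ConvertsIn (nu' : (M.K → ℝ) → (M.K → ℝ) → Fin m → ℝ) (t : ℕ)
    (v w : Fin m → ℝ) : Prop :=
  ∃ f : Fin (t + 1) → Fin m → ℝ, f 0 = v ∧ f (Fin.last t) = w ∧
    ∀ k : Fin t, M.Converts nu' (f k.castSucc) (f k.succ)

/-- Connectedness: each `e_i` converts to each `e_j` in finitely many steps,
i.e. `τ(M) < ∞`. -/
def Connected (nu' : (M.K → ℝ) → (M.K → ℝ) → Fin m → ℝ) : Prop :=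
  ∀ i j : Fin m, i ≠ j →
    ∃ t : ℕ, M.ConvertsIn nu' t (Pi.single i 1) (Pi.single j 1)

/-- `M ∈ 𝔐(m)` (relative to a chosen extension `nu'` of its net-trade function):
`M` is connected and satisfies Anonymity, Aggregation, Invariance, Non-dissipation
and Flexibility. -/
def MemM (nu' : (M.K → ℝ) → (M.K → ℝ) → Fin m → ℝ) : Prop :=
  M.Conserves ∧ M.Anonymous ∧ M.Aggregative ∧ M.Invariant ∧ M.NonDissipative ∧
    M.Flexible ∧ M.IsNuExtension nu' ∧ M.Connected nu'


/-- `P ⊆ K` contains exactly one pure `ij`-index for each ordered pair `(i,j)` for which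
`M` has a pure `ij`-index, and nothing else. -/
def IsPureSelection (P : Set M.K) : Prop :=
  (∀ h ∈ P, ∃ i j, M.IsPureIJIndex i j h) ∧
    ∀ i j : Fin m, (∃ h, M.IsPureIJIndex i j h) →
      ∃! h, h ∈ P ∧ M.IsPureIJIndex i j h

/-- `a ∈ S_P`: a nonnegative offer supported on `P`. -/
def SPoffer (P : Set M.K) (a : M.K → ℝ) : Prop :=
  M.Nonneg a ∧ ∀ h ∉ P, a h = 0

/-- `a ∈ S_P(v)`: a `P`-offer subordinate to `v`. -/
def SPofferLe (P : Set M.K) (v : Fin m → ℝ) (a : M.K → ℝ) : Prop :=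
  M.SPoffer P a ∧ M.agg a ≤ v

end ExchangeMechanism

/-!
Anonymity and Aggregation make the extended net-trade function `ν` additive in the offer; as it
is also positively homogeneous, `ν(a, b) = Σ_h a_h ν(e_h, b)`. Consequently a holding
concentrated on the commodities reachable from `i` along `ij`-indices stays so after any
conversion; connectedness therefore forces a chain of `ij`-indices from `i` to `j`. By
Flexibility each link `k → l` carries a pure index `h ∈ P`, for which Non-dissipation gives
`ν(e_h, b) = -e_k + u e_l` with `u > 0`; scaling these unit offers along the chain makes the
intermediate commodities cancel.
-/

theorem exists_pos_le_smul {ι : Type*} [Finite ι] (a b : ι → ℝ) (hb : ∀ i, 0 < b i) :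
    ∃ T : ℝ, 0 < T ∧ a ≤ T • b := by
  obtain ⟨Q, hQ⟩ := Finite.exists_le fun i => a i / b i
  refine ⟨max Q 1, by positivity, fun i => ?_⟩
  calc a i = a i / b i * b i := (div_mul_cancel₀ _ (hb i).ne').symm
    _ ≤ max Q 1 * b i := by gcongr; exacts [(hb i).le, (hQ i).trans (le_max_left _ _)]

theorem Matrix.vecCons_three_comp_swap_zero_one {α : Type*} (x y z : α) :
    ![x, y, z] ∘ Equiv.swap 0 1 = ![y, x, z] := by
  ext k; fin_cases k <;> rfl

theorem Matrix.vecCons_three_comp_swap_one_two {α : Type*} (x y z : α) :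
    ![x, y, z] ∘ Equiv.swap 1 2 = ![x, z, y] := by
  ext k; fin_cases k <;> rfl

namespace ExchangeMechanism

variable {m : ℕ} (M : ExchangeMechanism m)

theorem agg_add (a a' : M.K → ℝ) : M.agg (a + a') = M.agg a + M.agg a' := by
  ext i; simp [agg, Finset.sum_add_distrib]

theorem agg_unit (h : M.K) : M.agg (M.unit h) = Pi.single (M.ind h) 1 := by
  ext i; simp [agg, unit, Pi.single_apply, eq_comm]

theorem le_agg_ind {a : M.K → ℝ} (ha : M.Nonneg a) (h : M.K) : a h ≤ M.agg a (M.ind h) :=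
  Finset.single_le_sum (fun h' _ => ha h') (by simp)

theorem nonneg_unit (h : M.K) : M.Nonneg (M.unit h) :=
  fun _ => (Pi.single_nonneg.2 zero_le_one : 0 ≤ M.unit h) _

theorem valid_two {x y : M.K → ℝ} (hx : M.Nonneg x) (hy : M.Nonneg y) (hxy : M.Pos (x + y)) :
    M.Valid 2 ![x, y] :=
  ⟨fun k => by fin_cases k <;> assumption, by simpa [Fin.sum_univ_two] using hxy⟩

theorem valid_three {x y z : M.K → ℝ} (hx : M.Nonneg x) (hy : M.Nonneg y) (hz : M.Nonneg z)
    (hxyz : M.Pos (x + y + z)) : M.Valid 3 ![x, y, z] :=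
  ⟨fun k => by fin_cases k <;> assumption, by simpa [Fin.sum_univ_three] using hxyz⟩

theorem Valid.comp_perm {M : ExchangeMechanism m} {n : ℕ} {a : Fin n → M.K → ℝ}
    (h : M.Valid n a) (σ : Equiv.Perm (Fin n)) : M.Valid n (a ∘ σ) :=
  ⟨fun k => h.1 (σ k), by simpa only [Function.comp_apply, Equiv.sum_comp] using h.2⟩

theorem Valid.merge {M : ExchangeMechanism m} {x y z : M.K → ℝ} (h : M.Valid 3 ![x, y, z]) :
    M.Valid 2 ![x, y + z] :=
  M.valid_two (h.1 0) (fun k => add_nonneg (h.1 1 k) (h.1 2 k))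
    (by simpa [Fin.sum_univ_three, add_assoc] using h.2)

theorem Anonymous.rho_comp_perm {M : ExchangeMechanism m} (hA : M.Anonymous) {n : ℕ}
    {a : Fin n → M.K → ℝ} (h : M.Valid n a) (σ : Equiv.Perm (Fin n)) (k : Fin n) :
    M.rho n (a ∘ σ) k = M.rho n a (σ k) :=
  congrFun (hA n a σ h) k

theorem Anonymous.ret_swap {M : ExchangeMechanism m} (hA : M.Anonymous) {x y : M.K → ℝ}
    (h : M.Valid 2 ![x, y]) : M.ret y x = M.rho 2 ![x, y] 1 := by
  have hswap : ![x, y] ∘ Equiv.swap 0 1 = ![y, x] := by ext k; fin_cases k <;> rfl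
  have key := hA.rho_comp_perm h (Equiv.swap 0 1) 0
  rwa [hswap] at key

theorem Aggregative.rho_two_add {M : ExchangeMechanism m} (hAg : M.Aggregative)
    {x y z : M.K → ℝ} (h : M.Valid 3 ![x, y, z]) :
    M.rho 2 ![x, y + z] = ![M.rho 3 ![x, y, z] 0, M.rho 3 ![x, y, z] 1 + M.rho 3 ![x, y, z] 2] := by
  have snoc_eq {α : Type} (f : Fin 3 → α) (g : α) :
      (Fin.snoc (fun k : Fin 1 => f k.castSucc.castSucc) g : Fin 2 → α) = ![f 0, g] := by
    ext k; fin_cases k <;> rfl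
  have key := hAg 1 ![x, y, z] h
  rw [snoc_eq, snoc_eq] at key
  exact key

open Matrix in
/-- Split the offer `a₁ + a₂` of a trader facing `c = B - (a₁ + a₂)` into two traders, then let
each of them face the other together with `c`. -/
theorem trade_add (hA : M.Anonymous) (hAg : M.Aggregative) {a₁ a₂ B : M.K → ℝ}
    (h₁ : M.Nonneg a₁) (h₂ : M.Nonneg a₂) (hle : a₁ + a₂ ≤ B) (hB : M.Pos B) :
    M.trade (a₁ + a₂) B = M.trade a₁ B + M.trade a₂ B := by
  set c := B - (a₁ + a₂)
  have hc : M.Nonneg c := fun h => sub_nonneg.2 (hle h)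
  have V : M.Valid 3 ![c, a₁, a₂] := M.valid_three hc h₁ h₂ (by simpa [c, add_assoc] using hB)
  have V' : M.Valid 3 ![c, a₂, a₁] := by
    rw [← vecCons_three_comp_swap_one_two]; exact V.comp_perm _
  have V₁ : M.Valid 3 ![a₁, c, a₂] := by
    rw [← vecCons_three_comp_swap_zero_one]; exact V.comp_perm _
  have V₂ : M.Valid 3 ![a₂, c, a₁] := by
    rw [← vecCons_three_comp_swap_zero_one]; exact V'.comp_perm _
  calc M.trade (a₁ + a₂) B = M.rho 2 ![c, a₁ + a₂] 1 := hA.ret_swap V.merge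
    _ = M.rho 3 ![c, a₁, a₂] 1 + M.rho 3 ![c, a₁, a₂] 2 := congrFun (hAg.rho_two_add V) 1
    _ = M.rho 3 ![a₁, c, a₂] 0 + M.rho 3 ![a₂, c, a₁] 0 := by
      rw [← vecCons_three_comp_swap_zero_one c a₁ a₂, hA.rho_comp_perm V,
        ← vecCons_three_comp_swap_zero_one c a₂ a₁, hA.rho_comp_perm V',
        ← vecCons_three_comp_swap_one_two c a₁ a₂, hA.rho_comp_perm V]
      rfl
    _ = M.trade a₁ B + M.trade a₂ B := by
      rw [trade, trade, show B - a₁ = c + a₂ by simp only [c]; abel,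
        show B - a₂ = c + a₁ by simp only [c]; abel, ret, ret,
        hAg.rho_two_add V₁, hAg.rho_two_add V₂]
      rfl

theorem nu_add (hA : M.Anonymous) (hAg : M.Aggregative) {a₁ a₂ B : M.K → ℝ}
    (h₁ : M.Nonneg a₁) (h₂ : M.Nonneg a₂) (hle : a₁ + a₂ ≤ B) (hB : M.Pos B) :
    M.nu (a₁ + a₂) B = M.nu a₁ B + M.nu a₂ B := by
  simp only [nu, M.trade_add hA hAg h₁ h₂ hle hB, agg_add]
  abel

theorem SPoffer.add {M : ExchangeMechanism m} {P : Set M.K} {a a' : M.K → ℝ}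
    (ha : M.SPoffer P a) (ha' : M.SPoffer P a') : M.SPoffer P (a + a') :=
  ⟨fun h => add_nonneg (ha.1 h) (ha'.1 h), fun h hh => by simp [ha.2 h hh, ha'.2 h hh]⟩

theorem SPoffer.smul {M : ExchangeMechanism m} {P : Set M.K} {a : M.K → ℝ}
    (ha : M.SPoffer P a) {t : ℝ} (ht : 0 ≤ t) : M.SPoffer P (t • a) :=
  ⟨fun h => mul_nonneg ht (ha.1 h), fun h hh => by simp [ha.2 h hh]⟩

theorem spOffer_unit {P : Set M.K} {h : M.K} (hh : h ∈ P) : M.SPoffer P (M.unit h) :=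
  ⟨M.nonneg_unit h, fun _ hh' => Pi.single_eq_of_ne (by rintro rfl; exact hh' hh) _⟩

namespace IsNuExtension

variable {M} {nu' : (M.K → ℝ) → (M.K → ℝ) → Fin m → ℝ}

theorem eq_nu_smul (hext : M.IsNuExtension nu') {a b : M.K → ℝ} (ha : M.Nonneg a)
    (hb : M.Pos b) {T : ℝ} (hT : 0 < T) (hle : a ≤ T • b) : nu' a b = M.nu a (T • b) := by
  rw [← hext.2.2 a b T ha hb hT]
  exact hext.1 a _ ha (fun h => mul_pos hT (hb h)) hle

theorem zero (hext : M.IsNuExtension nu') {b : M.K → ℝ} (hb : M.Pos b) : nu' 0 b = 0 := by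
  have h2 := hext.2.1 0 b 2 (fun _ => le_rfl) hb two_pos
  rw [smul_zero, two_smul, left_eq_add] at h2
  exact h2

theorem smul (hext : M.IsNuExtension nu') {a b : M.K → ℝ} (ha : M.Nonneg a) (hb : M.Pos b)
    {t : ℝ} (ht : 0 ≤ t) : nu' (t • a) b = t • nu' a b := by
  rcases ht.eq_or_lt with rfl | ht
  · simp [hext.zero hb]
  · exact hext.2.1 a b t ha hb ht

theorem add (hext : M.IsNuExtension nu') (hA : M.Anonymous) (hAg : M.Aggregative)
    {a₁ a₂ b : M.K → ℝ} (h₁ : M.Nonneg a₁) (h₂ : M.Nonneg a₂) (hb : M.Pos b) :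
    nu' (a₁ + a₂) b = nu' a₁ b + nu' a₂ b := by
  obtain ⟨T, hT, hle⟩ := exists_pos_le_smul (a₁ + a₂) b hb
  have hTb : M.Pos (T • b) := fun h => mul_pos hT (hb h)
  have h₁₂ : M.Nonneg (a₁ + a₂) := fun h => add_nonneg (h₁ h) (h₂ h)
  rw [hext.eq_nu_smul h₁₂ hb hT hle,
    hext.eq_nu_smul h₁ hb hT ((le_add_of_nonneg_right h₂).trans hle),
    hext.eq_nu_smul h₂ hb hT ((le_add_of_nonneg_left h₁).trans hle),
    M.nu_add hA hAg h₁ h₂ hle hTb]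

theorem sum (hext : M.IsNuExtension nu') (hA : M.Anonymous) (hAg : M.Aggregative)
    {ι : Type*} (s : Finset ι) {f : ι → M.K → ℝ} (hf : ∀ i ∈ s, M.Nonneg (f i))
    {b : M.K → ℝ} (hb : M.Pos b) : nu' (∑ i ∈ s, f i) b = ∑ i ∈ s, nu' (f i) b := by
  classical
  induction s using Finset.induction_on with
  | empty => simpa using hext.zero hb
  | insert i s hi ih =>
    have hs : M.Nonneg (∑ i ∈ s, f i) := fun h => by
      rw [Finset.sum_apply]
      exact Finset.sum_nonneg fun j hj => hf j (Finset.mem_insert_of_mem hj) h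
    rw [Finset.sum_insert hi, Finset.sum_insert hi,
      hext.add hA hAg (hf i (Finset.mem_insert_self i s)) hs hb,
      ih fun j hj => hf j (Finset.mem_insert_of_mem hj)]

theorem eq_sum_unit (hext : M.IsNuExtension nu') (hA : M.Anonymous) (hAg : M.Aggregative)
    {a b : M.K → ℝ} (ha : M.Nonneg a) (hb : M.Pos b) :
    nu' a b = ∑ h, a h • nu' (M.unit h) b := by
  have hunit (h : M.K) : Pi.single h (a h) = a h • M.unit h := by
    rw [unit, ← Pi.single_smul, smul_eq_mul, mul_one]
  have hsum : a = ∑ h, a h • M.unit h := by simp_rw [← hunit, Finset.univ_sum_single]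
  conv_lhs => rw [hsum]
  rw [hext.sum hA hAg (f := fun h => a h • M.unit h) _
    (fun h _ k => mul_nonneg (ha h) (M.nonneg_unit h k)) hb]
  exact Finset.sum_congr rfl fun h _ => hext.smul (M.nonneg_unit h) hb (ha h)

theorem exists_unit_eq_ret_sub (hext : M.IsNuExtension nu') (h : M.K) {b : M.K → ℝ}
    (hb : M.Pos b) : ∃ c, M.Valid 2 ![M.unit h, c] ∧
      nu' (M.unit h) b = M.ret (M.unit h) c - Pi.single (M.ind h) 1 := by
  obtain ⟨T, hT, hle⟩ := exists_pos_le_smul (M.unit h) b hb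
  refine ⟨T • b - M.unit h, M.valid_two (M.nonneg_unit h) (fun k => sub_nonneg.2 (hle k)) ?_, ?_⟩
  · rw [add_sub_cancel]
    exact fun k => mul_pos hT (hb k)
  · rw [hext.eq_nu_smul (M.nonneg_unit h) hb hT hle, nu, trade, agg_unit]

theorem unit_apply_nonpos (hext : M.IsNuExtension nu') {h : M.K} {b : M.K → ℝ} (hb : M.Pos b)
    {l : Fin m} (hl : l ≠ M.ind h) (hno : ¬ M.IsIJIndex (M.ind h) l h) :
    nu' (M.unit h) b l ≤ 0 := by
  obtain ⟨c, hV, hc⟩ := hext.exists_unit_eq_ret_sub h hb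
  rw [hc, Pi.sub_apply, Pi.single_eq_of_ne hl, sub_zero]
  exact not_lt.1 fun hpos => hno ⟨rfl, c, hV, hpos⟩

theorem unit_of_isPureIJIndex (hext : M.IsNuExtension nu') (hND : M.NonDissipative)
    {i j : Fin m} (hij : i ≠ j) {h : M.K} (hpure : M.IsPureIJIndex i j h) {b : M.K → ℝ}
    (hb : M.Pos b) : ∃ u : ℝ, 0 < u ∧
      nu' (M.unit h) b = -Pi.single i 1 + u • (Pi.single j 1 : Fin m → ℝ) := by
  obtain ⟨c, hV, hc⟩ := hext.exists_unit_eq_ret_sub h hb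
  have hind : M.ind h = i := hpure.1.1
  have hzero : ∀ k ≠ j, M.ret (M.unit h) c k = 0 := hpure.2 c hV
  have hr : M.ret (M.unit h) c = Pi.single j (M.ret (M.unit h) c j) := by
    ext k
    rcases eq_or_ne k j with rfl | hk
    · simp
    · rw [Pi.single_eq_of_ne hk, hzero k hk]
  -- Non-dissipation: the return is not `e_i` since it vanishes at `i`, so it exceeds `e_i`
  -- somewhere, and it can only be at `j`.
  have hrj : 0 < M.ret (M.unit h) c j := by
    have hagg : M.agg (M.unit h) = Pi.single i 1 := by rw [agg_unit, hind]
    rcases hND 2 ![M.unit h, c] hV 0 with he | ⟨l, hl⟩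
    · have hi : M.ret (M.unit h) c i = M.agg (M.unit h) i := congrFun he i
      simp [hagg, hzero i hij] at hi
    · change M.agg (M.unit h) l < M.ret (M.unit h) c l at hl
      rw [hagg] at hl
      rcases eq_or_ne l j with rfl | hlj
      · rwa [Pi.single_eq_of_ne hij.symm] at hl
      · rw [hzero l hlj, Pi.single_apply] at hl
        split_ifs at hl <;> linarith
  refine ⟨_, hrj, ?_⟩
  conv_lhs => rw [hc, hind, hr]
  rw [← Pi.single_smul, smul_eq_mul, mul_one, sub_eq_neg_add]

end IsNuExtension

def Trades (k l : Fin m) : Prop := k ≠ l ∧ ∃ h, M.IsIJIndex k l h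

section Reachability

variable {M} {nu' : (M.K → ℝ) → (M.K → ℝ) → Fin m → ℝ} {R : Set (Fin m)}

theorem IsNuExtension.apply_nonpos_of_support (hext : M.IsNuExtension nu') (hA : M.Anonymous)
    (hAg : M.Aggregative) (hR : ∀ ⦃k l⦄, k ∈ R → M.Trades k l → l ∈ R) {a b : M.K → ℝ}
    (ha : M.Nonneg a) (hsupp : ∀ h, 0 < a h → M.ind h ∈ R) (hb : M.Pos b) {l : Fin m}
    (hl : l ∉ R) : nu' a b l ≤ 0 := by
  rw [hext.eq_sum_unit hA hAg ha hb, Finset.sum_apply]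
  refine Finset.sum_nonpos fun h _ => ?_
  rcases (ha h).eq_or_lt with h0 | hpos
  · simp [← h0]
  · have hk := hsupp h hpos
    have hlk : l ≠ M.ind h := by rintro rfl; exact hl hk
    exact mul_nonpos_of_nonneg_of_nonpos hpos.le
      (hext.unit_apply_nonpos hb hlk fun hidx => hl (hR hk ⟨hlk.symm, h, hidx⟩))

theorem Converts.nonpos_of_nonpos (hext : M.IsNuExtension nu') (hA : M.Anonymous)
    (hAg : M.Aggregative) (hR : ∀ ⦃k l⦄, k ∈ R → M.Trades k l → l ∈ R) {v w : Fin m → ℝ}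
    (hvw : M.Converts nu' v w) (hv : ∀ l ∉ R, v l ≤ 0) : ∀ l ∉ R, w l ≤ 0 := by
  obtain ⟨a, b, ha, hb, hav, rfl⟩ := hvw
  have hsupp (h : M.K) (hpos : 0 < a h) : M.ind h ∈ R := by
    by_contra hk
    linarith [hv _ hk, M.le_agg_ind ha h, hav (M.ind h)]
  intro l hl
  have hν := hext.apply_nonpos_of_support hA hAg hR ha hsupp hb hl
  rw [Pi.add_apply]
  linarith [hv l hl]

theorem ConvertsIn.nonpos_of_nonpos (hext : M.IsNuExtension nu') (hA : M.Anonymous)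
    (hAg : M.Aggregative) (hR : ∀ ⦃k l⦄, k ∈ R → M.Trades k l → l ∈ R) {t : ℕ}
    {v w : Fin m → ℝ} (hvw : M.ConvertsIn nu' t v w) (hv : ∀ l ∉ R, v l ≤ 0) :
    ∀ l ∉ R, w l ≤ 0 := by
  obtain ⟨f, rfl, rfl, hf⟩ := hvw
  exact Fin.induction (motive := fun k => ∀ l ∉ R, f k l ≤ 0) hv
    (fun k hk => (hf k).nonpos_of_nonpos hext hA hAg hR hk) _

/-- The commodities reachable from `i` form a trade-closed set outside which `e_i` vanishes. -/
theorem ConvertsIn.reflTransGen_trades (hext : M.IsNuExtension nu') (hA : M.Anonymous)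
    (hAg : M.Aggregative) {i j : Fin m} {t : ℕ}
    (hij : M.ConvertsIn nu' t (Pi.single i 1) (Pi.single j 1)) :
    Relation.ReflTransGen M.Trades i j := by
  have hi (l : Fin m) (hl : ¬ Relation.ReflTransGen M.Trades i l) :
      (Pi.single i 1 : Fin m → ℝ) l ≤ 0 := by
    rw [Pi.single_eq_of_ne]
    rintro rfl
    exact hl .refl
  by_contra hnot
  have hj := hij.nonpos_of_nonpos hext hA hAg (R := {l | Relation.ReflTransGen M.Trades i l})
    (fun _ _ hk hkl => hk.tail hkl) hi j hnot
  norm_num at hj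

end Reachability

theorem IsPureSelection.exists_mem {M : ExchangeMechanism m} {P : Set M.K}
    (hP : M.IsPureSelection P) (hF : M.Flexible) {k l : Fin m} (hkl : M.Trades k l) :
    ∃ h ∈ P, M.IsPureIJIndex k l h := by
  obtain ⟨h, hh, -⟩ := hP.2 k l (hF k l hkl.2)
  exact ⟨h, hh⟩

theorem IsNuExtension.exists_spOffer_of_transGen {M : ExchangeMechanism m}
    {nu' : (M.K → ℝ) → (M.K → ℝ) → Fin m → ℝ} (hext : M.IsNuExtension nu') (hA : M.Anonymous)
    (hAg : M.Aggregative) (hND : M.NonDissipative) (hF : M.Flexible) {P : Set M.K}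
    (hP : M.IsPureSelection P) {b : M.K → ℝ} (hb : M.Pos b) {i j : Fin m}
    (hij : Relation.TransGen M.Trades i j) :
    ∃ a, M.SPoffer P a ∧ ∃ s t : ℝ, 0 < s ∧ 0 < t ∧
      nu' a b = (-s) • (Pi.single i 1 : Fin m → ℝ) + t • (Pi.single j 1 : Fin m → ℝ) := by
  induction hij with
  | single hij =>
    obtain ⟨h, hhP, hpure⟩ := hP.exists_mem hF hij
    obtain ⟨u, hu, hν⟩ := hext.unit_of_isPureIJIndex hND hij.1 hpure hb
    exact ⟨M.unit h, M.spOffer_unit hhP, 1, u, one_pos, hu, by rw [hν, neg_smul, one_smul]⟩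
  | tail _ hkj ih =>
    obtain ⟨a, ha, s, t, hs, ht, hνa⟩ := ih
    obtain ⟨h, hhP, hpure⟩ := hP.exists_mem hF hkj
    obtain ⟨u, hu, hν⟩ := hext.unit_of_isPureIJIndex hND hkj.1 hpure hb
    -- Spending `t` units on `h` turns the `t e_k` gained by `a` into `t u e_j`.
    refine ⟨a + t • M.unit h, ha.add ((M.spOffer_unit hhP).smul ht.le), s, t * u, hs,
      mul_pos ht hu, ?_⟩
    rw [hext.add hA hAg ha.1 ((M.spOffer_unit hhP).smul ht.le).1 hb,
      hext.smul (M.nonneg_unit h) hb ht.le, hνa, hν, smul_add, smul_neg, mul_smul]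
    abel

end ExchangeMechanism

/-- Convertibility.  Let `M ∈ 𝔐(m)`.  For every `b ∈ S₊` and every pair
of distinct commodities `i ≠ j`, there exists an offer `a ∈ S_P` such that `ν(a,b)` is an
`īj`-vector, i.e. `ν(a,b) = −s·e_i + t·e_j` for some reals `s,t > 0` (all other components
zero). -/
theorem convertibility {m : ℕ} (M : ExchangeMechanism m)
    (nu' : (M.K → ℝ) → (M.K → ℝ) → Fin m → ℝ) (hM : M.MemM nu')
    (P : Set M.K) (hP : M.IsPureSelection P) :
    ∀ b, M.Pos b → ∀ i j : Fin m, i ≠ j →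
      ∃ a, M.SPoffer P a ∧ ∃ s t : ℝ, 0 < s ∧ 0 < t ∧
        nu' a b = (-s) • (Pi.single i 1 : Fin m → ℝ) + t • (Pi.single j 1 : Fin m → ℝ) := by
  obtain ⟨-, hA, hAg, -, hND, hF, hext, hconn⟩ := hM
  intro b hb i j hij
  obtain ⟨t, hconv⟩ := hconn i j hij
  have hreach := hconv.reflTransGen_trades hext hA hAg
  have htrans : Relation.TransGen M.Trades i j :=
    (Relation.reflTransGen_iff_eq_or_transGen.1 hreach).resolve_left hij.symm
  exact hext.exists_spOffer_of_transGen hA hAg hND hF hP hb htrans
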